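/- Let p ∈ (1,2], δ > 0 and A ≥ 1, and set ω := ω_{p,δ}, a(t) := (δ+t)^{p−2} and a^A(t) := (ω^A)'(t)/t for t > 0, with a^A(0) := δ^{p−2}. Then a^A is non-increasing on [0,∞) and, for all t ≥ 0: (p−1)·a(t) ≤ a^A(t) ≤ δ^{p−2} and (p−1)·(δ+A)^{p−2} ≤ a^A(t). -/

import Mathlib

open Real Set MeasureTheory Filter Matrix

noncomputable section

/-- The N-function `omega_{p,delta}(t) = int_0^t (delta+s)^(p-2) s ds`. -/
def omg (p δ : ℝ) (t : ℝ) : ℝ := ∫ s in (0:ℝ)..t, (δ + s) ^ (p - 2) * s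

/-- The `A`-approximation of a function `φ`: it equals `φ` on `[0,A]` and is the
second-order Taylor polynomial of `φ` at `A` for `t > A`. -/
def approxA (φ : ℝ → ℝ) (A : ℝ) (t : ℝ) : ℝ :=
  if t ≤ A then φ t
  else (1/2) * deriv (deriv φ) A * t ^ 2 + (deriv φ A - deriv (deriv φ) A * A) * t
    + (φ A - deriv φ A * A + (1/2) * deriv (deriv φ) A * A ^ 2)

/-- `φ` is a regular N-function: continuous, convex, positive for `t > 0`,
`φ(t)/t → 0` as `t → 0⁺`, `φ(t)/t → ∞` as `t → ∞`, `C¹` on `[0,∞)`, `C²` on `(0,∞)`,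
with `φ'' > 0` on `(0,∞)`. -/
structure IsRegularNFunction (φ : ℝ → ℝ) : Prop where
  continuousOn : ContinuousOn φ (Set.Ici 0)
  convexOn : ConvexOn ℝ (Set.Ici 0) φ
  pos : ∀ t : ℝ, 0 < t → 0 < φ t
  tendsto_zero : Filter.Tendsto (fun t => φ t / t) (nhdsWithin 0 (Set.Ioi 0)) (nhds 0)
  tendsto_atTop : Filter.Tendsto (fun t => φ t / t) Filter.atTop Filter.atTop
  diffAt : ∀ t : ℝ, 0 < t → DifferentiableAt ℝ φ t
  deriv_continuousOn : ContinuousOn (deriv φ) (Set.Ici 0)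
  diffAt2 : ∀ t : ℝ, 0 < t → DifferentiableAt ℝ (deriv φ) t
  deriv2_continuousOn : ContinuousOn (deriv (deriv φ)) (Set.Ioi 0)
  deriv2_pos : ∀ t : ℝ, 0 < t → 0 < deriv (deriv φ) t

/-- `φ` is a balanced N-function with characteristics `(γ₁, γ₂)`:
`γ₁ φ'(t) ≤ t φ''(t) ≤ γ₂ φ'(t)` for all `t > 0`. -/
structure IsBalanced (φ : ℝ → ℝ) (γ₁ γ₂ : ℝ) : Prop where
  regular : IsRegularNFunction φ
  gamma1_mem : γ₁ ∈ Set.Ioc (0:ℝ) 1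
  gamma2_ge : 1 ≤ γ₂
  lower : ∀ t : ℝ, 0 < t → γ₁ * deriv φ t ≤ t * deriv (deriv φ) t
  upper : ∀ t : ℝ, 0 < t → t * deriv (deriv φ) t ≤ γ₂ * deriv φ t

/-- `ψ` satisfies the Δ₂-condition with constant `K`. -/
def SatisfiesDelta2 (ψ : ℝ → ℝ) (K : ℝ) : Prop :=
  2 ≤ K ∧ ∀ t : ℝ, 0 ≤ t → ψ (2 * t) ≤ K * ψ t

/-- The complementary N-function `φ*(t) = ∫₀ᵗ (φ')⁻¹(s) ds`, where `(φ')⁻¹` is the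
inverse on `[0,∞)` of the (strictly increasing) derivative `φ'`. -/
def conj (φ : ℝ → ℝ) (t : ℝ) : ℝ :=
  ∫ s in (0:ℝ)..t, Function.invFunOn (deriv φ) (Set.Ici 0) s

/-- `a^A(t) = (ω^A)'(t)/t` for `t > 0`, with `a^A(0) = δ^{p−2}`. -/
def aA (p δ A : ℝ) (t : ℝ) : ℝ :=
  if t = 0 then δ ^ (p - 2) else deriv (approxA (omg p δ) A) t / t

/-!
On `[0, A]` the approximation is `ω` itself, so `a^A(t) = (δ + t)^{p-2}`, which is non-increasing
because `p ≤ 2`. Beyond `A` the derivative of `ω^A` is affine, and using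
`ω''(A) = (δ + A)^{p-3} ((p-1) A + δ)` one finds
`a^A(t) = (δ + A)^{p-3} ((p-1) A + δ + (2-p) A² / t)`, again non-increasing, and exceeding
`(p-1)(δ+A)^{p-2}` by `(2-p)(δ+A)^{p-3} (δ + A² / t) ≥ 0`. The remaining bounds follow from these
two formulas and monotonicity, the upper one from `a^A(0) = δ^{p-2}`.
-/

section ApproxA

variable {φ : ℝ → ℝ} {A t : ℝ}

theorem approxA_of_le (h : t ≤ A) : approxA φ A t = φ t := if_pos h

theorem approxA_of_ge (h : A ≤ t) :
    approxA φ A t = φ A + deriv φ A * (t - A) + deriv (deriv φ) A / 2 * (t - A) ^ 2 := by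
  rcases h.eq_or_lt with rfl | h
  · simp [approxA]
  · simp only [approxA, if_neg h.not_ge]
    ring

theorem hasDerivAt_approxA_taylor (φ : ℝ → ℝ) (A t : ℝ) :
    HasDerivAt (fun s => φ A + deriv φ A * (s - A) + deriv (deriv φ) A / 2 * (s - A) ^ 2)
      (deriv (deriv φ) A * (t - A) + deriv φ A) t := by
  have hlin := (hasDerivAt_id' t).sub_const A
  refine (((hlin.const_mul (deriv φ A)).const_add (φ A)).add
    ((hlin.pow 2).const_mul (deriv (deriv φ) A / 2))).congr_deriv ?_
  push_cast
  ring

theorem deriv_approxA_of_lt (h : t < A) : deriv (approxA φ A) t = deriv φ t :=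
  (eventuallyEq_of_mem (Iio_mem_nhds h) fun _ hs => approxA_of_le (le_of_lt hs)).deriv_eq

theorem deriv_approxA_of_gt (h : A < t) :
    deriv (approxA φ A) t = deriv (deriv φ) A * (t - A) + deriv φ A := by
  have heq : approxA φ A =ᶠ[nhds t]
      fun s => φ A + deriv φ A * (s - A) + deriv (deriv φ) A / 2 * (s - A) ^ 2 :=
    eventuallyEq_of_mem (Ioi_mem_nhds h) fun _ hs => approxA_of_ge (le_of_lt hs)
  rw [heq.deriv_eq]
  exact (hasDerivAt_approxA_taylor φ A t).deriv

theorem hasDerivAt_approxA_self {φ' : ℝ} (hφ : HasDerivAt φ φ' A) :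
    HasDerivAt (approxA φ A) φ' A := by
  have hleft : HasDerivWithinAt (approxA φ A) φ' (Iic A) A :=
    hφ.hasDerivWithinAt.congr (fun _ hs => approxA_of_le hs) (approxA_of_le le_rfl)
  have hright : HasDerivWithinAt (approxA φ A) φ' (Ici A) A := by
    have htaylor := (hasDerivAt_approxA_taylor φ A A).congr_deriv
      (by rw [sub_self, mul_zero, zero_add, hφ.deriv])
    exact htaylor.hasDerivWithinAt.congr (fun _ hs => approxA_of_ge hs) (approxA_of_ge le_rfl)
  simpa [Iic_union_Ici] using hleft.union hright

theorem deriv_approxA_of_le (hφ : DifferentiableAt ℝ φ A) (h : t ≤ A) :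
    deriv (approxA φ A) t = deriv φ t := by
  rcases h.lt_or_eq with h | rfl
  · exact deriv_approxA_of_lt h
  · exact (hasDerivAt_approxA_self hφ.hasDerivAt).deriv

theorem deriv_approxA_of_ge (hφ : DifferentiableAt ℝ φ A) (h : A ≤ t) :
    deriv (approxA φ A) t = deriv (deriv φ) A * (t - A) + deriv φ A := by
  rcases h.lt_or_eq with h | rfl
  · exact deriv_approxA_of_gt h
  · rw [sub_self, mul_zero, zero_add, (hasDerivAt_approxA_self hφ.hasDerivAt).deriv]

end ApproxA

section Omega

variable {p δ t : ℝ}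

theorem hasDerivAt_rpow_mul_self (ht : 0 < δ + t) :
    HasDerivAt (fun s => (δ + s) ^ (p - 2) * s) ((δ + t) ^ (p - 3) * ((p - 1) * t + δ)) t := by
  have hpow : HasDerivAt (fun s => (δ + s) ^ (p - 2)) (1 * (p - 2) * (δ + t) ^ (p - 2 - 1)) t :=
    ((hasDerivAt_id' t).const_add δ).rpow_const (Or.inl ht.ne')
  refine (hpow.mul (hasDerivAt_id' t)).congr_deriv ?_
  rw [show p - 2 = p - 3 + 1 by ring, rpow_add_one ht.ne', show p - 3 + 1 - 1 = p - 3 by ring]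
  ring

theorem continuousOn_rpow_mul_self :
    ContinuousOn (fun s => (δ + s) ^ (p - 2) * s) (Ioi (-δ)) := fun s hs =>
  (hasDerivAt_rpow_mul_self (by simpa [neg_lt_iff_pos_add'] using hs)).continuousAt.continuousWithinAt

theorem hasDerivAt_omg (hδ : 0 < δ) (ht : -δ < t) :
    HasDerivAt (omg p δ) ((δ + t) ^ (p - 2) * t) t := by
  have hcont := continuousOn_rpow_mul_self (p := p) (δ := δ)
  have hsub : uIcc 0 t ⊆ Ioi (-δ) :=
    ordConnected_Ioi.uIcc_subset (neg_lt_zero.mpr hδ) ht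
  exact intervalIntegral.integral_hasDerivAt_right ((hcont.mono hsub).intervalIntegrable)
    (hcont.stronglyMeasurableAtFilter isOpen_Ioi t ht) (hcont.continuousAt (Ioi_mem_nhds ht))

theorem deriv_omg (hδ : 0 < δ) (ht : -δ < t) : deriv (omg p δ) t = (δ + t) ^ (p - 2) * t :=
  (hasDerivAt_omg hδ ht).deriv

theorem deriv_deriv_omg (hδ : 0 < δ) (ht : -δ < t) :
    deriv (deriv (omg p δ)) t = (δ + t) ^ (p - 3) * ((p - 1) * t + δ) := by
  have heq : deriv (omg p δ) =ᶠ[nhds t] fun s => (δ + s) ^ (p - 2) * s :=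
    eventuallyEq_of_mem (Ioi_mem_nhds ht) fun _ hs => deriv_omg hδ hs
  rw [heq.deriv_eq]
  exact (hasDerivAt_rpow_mul_self (by linarith)).deriv

end Omega

section ExplicitForm

variable {p δ A t : ℝ}

theorem aA_of_le (hδ : 0 < δ) (hA : 0 < A) (ht : 0 ≤ t) (htA : t ≤ A) :
    aA p δ A t = (δ + t) ^ (p - 2) := by
  rcases ht.eq_or_lt with rfl | ht
  · simp [aA]
  rw [aA, if_neg ht.ne', deriv_approxA_of_le (hasDerivAt_omg hδ (by linarith)).differentiableAt htA,
    deriv_omg hδ (by linarith), mul_div_cancel_right₀ _ ht.ne']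

theorem aA_of_ge (hδ : 0 < δ) (hA : 0 < A) (htA : A ≤ t) :
    aA p δ A t = (δ + A) ^ (p - 3) * ((p - 1) * A + δ + (2 - p) * A ^ 2 / t) := by
  have hA' : -δ < A := by linarith
  have hδA : δ + A ≠ 0 := by linarith
  have ht : t ≠ 0 := by linarith
  rw [aA, if_neg ht, deriv_approxA_of_ge (hasDerivAt_omg hδ hA').differentiableAt htA,
    deriv_deriv_omg hδ hA', deriv_omg hδ hA', show p - 2 = p - 3 + 1 by ring, rpow_add_one hδA]
  field_simp
  ring

theorem antitoneOn_aA (hp : p ≤ 2) (hδ : 0 < δ) (hA : 0 < A) : AntitoneOn (aA p δ A) (Ici 0) := by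
  have hleft : AntitoneOn (aA p δ A) (Icc 0 A) := by
    intro s hs t ht hst
    rw [aA_of_le hδ hA hs.1 hs.2, aA_of_le hδ hA ht.1 ht.2]
    exact rpow_le_rpow_of_nonpos (by linarith [hs.1]) (by linarith) (by linarith)
  have hright : AntitoneOn (aA p δ A) (Ici A) := by
    intro s hs t ht hst
    rw [aA_of_ge hδ hA hs, aA_of_ge hδ hA ht]
    have hquot : (2 - p) * A ^ 2 / t ≤ (2 - p) * A ^ 2 / s :=
      div_le_div_of_nonneg_left (by have := sq_nonneg A; nlinarith)
        (lt_of_lt_of_le hA hs) hst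
    gcongr
  rw [← Icc_union_Ici_eq_Ici hA.le]
  exact hleft.union_right hright (isGreatest_Icc hA.le) isLeast_Ici

theorem sub_one_mul_rpow_le_aA (hp : p ≤ 2) (hδ : 0 < δ) (hA : 0 < A) (ht : 0 ≤ t) :
    (p - 1) * (δ + A) ^ (p - 2) ≤ aA p δ A t := by
  have hδA : 0 < δ + A := by linarith
  rcases le_total t A with htA | htA
  · rw [aA_of_le hδ hA ht htA]
    have hmono : (δ + A) ^ (p - 2) ≤ (δ + t) ^ (p - 2) :=
      rpow_le_rpow_of_nonpos (by linarith) (by linarith) (by linarith)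
    nlinarith [rpow_pos_of_pos hδA (p - 2)]
  · rw [aA_of_ge hδ hA htA, show p - 2 = p - 3 + 1 by ring, rpow_add_one hδA.ne']
    have hquot : 0 ≤ (2 - p) * A ^ 2 / t := by
      have := sq_nonneg A
      exact div_nonneg (by nlinarith) (by linarith)
    have hgap : (p - 1) * (δ + A) ≤ (p - 1) * A + δ + (2 - p) * A ^ 2 / t := by nlinarith
    calc (p - 1) * ((δ + A) ^ (p - 3) * (δ + A))
        = (δ + A) ^ (p - 3) * ((p - 1) * (δ + A)) := by ring
      _ ≤ _ := mul_le_mul_of_nonneg_left hgap (rpow_pos_of_pos hδA _).le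

theorem sub_one_mul_le_aA (hp : p ∈ Icc (1 : ℝ) 2) (hδ : 0 < δ) (hA : 0 < A) (ht : 0 ≤ t) :
    (p - 1) * (δ + t) ^ (p - 2) ≤ aA p δ A t := by
  rcases le_total t A with htA | htA
  · rw [aA_of_le hδ hA ht htA]
    nlinarith [hp.2, rpow_pos_of_pos (show 0 < δ + t by linarith) (p - 2)]
  · calc (p - 1) * (δ + t) ^ (p - 2) ≤ (p - 1) * (δ + A) ^ (p - 2) := by
          refine mul_le_mul_of_nonneg_left ?_ (by linarith [hp.1])
          exact rpow_le_rpow_of_nonpos (by linarith) (by linarith) (by linarith [hp.2])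
      _ ≤ aA p δ A t := sub_one_mul_rpow_le_aA hp.2 hδ hA ht

end ExplicitForm

/-- For `p ∈ (1,2]`, `δ > 0`, `A ≥ 1`, the function `a^A` is
non-increasing on `[0,∞)` and satisfies `(p−1)(δ+t)^{p−2} ≤ a^A(t) ≤ δ^{p−2}` and
`(p−1)(δ+A)^{p−2} ≤ a^A(t)` for all `t ≥ 0`. -/
theorem stmt5 (p δ A : ℝ) (hp : p ∈ Set.Ioc (1:ℝ) 2) (hδ : 0 < δ) (hA : 1 ≤ A) :
    (∀ s t : ℝ, 0 ≤ s → s ≤ t → aA p δ A t ≤ aA p δ A s) ∧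
    ∀ t : ℝ, 0 ≤ t →
      (p - 1) * (δ + t) ^ (p - 2) ≤ aA p δ A t ∧
      aA p δ A t ≤ δ ^ (p - 2) ∧
      (p - 1) * (δ + A) ^ (p - 2) ≤ aA p δ A t := by
  have hA0 : 0 < A := by linarith
  have hanti := antitoneOn_aA hp.2 hδ hA0
  refine ⟨fun s t hs hst => hanti hs (hs.trans hst) hst, fun t ht => ⟨?_, ?_, ?_⟩⟩
  · exact sub_one_mul_le_aA (Ioc_subset_Icc_self hp) hδ hA0 ht
  · simpa [aA] using hanti (mem_Ici.mpr le_rfl) ht ht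
  · exact sub_one_mul_rpow_le_aA hp.2 hδ hA0 ht

end
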